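/- Let ξ ∈ L¹([0,2π]) be real-valued and ψ : 𝕋 → ℂ with Σ_{n∈ℤ}|n ψ̂(n)| < ∞. Let ξ̃(z, z̄) and ψ̃(z, z̄) denote their harmonic extensions to the open unit disc (ξ̃ = Poisson integral of ξ, ψ̃(z,z̄) = ψ̂(0) + Σ_{n≥1} ψ̂(−n) z̄ⁿ + Σ_{n≥1} ψ̂(n) zⁿ), and let J(ξ̃,ψ̃) = (∂ξ̃/∂z)(∂ψ̃/∂z̄) − (∂ψ̃/∂z)(∂ξ̃/∂z̄). Then lim_{R↑1} ∫_{|z|≤R} J(ξ̃,ψ̃)(z,z̄) dz∧dz̄ = 2πi Σ_{n∈ℤ} n ψ̂(n) ξ̂(−n), which equals ∫₀^{2π} (d/dt)[ψ(e^{it})] ξ(t) dt. -/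

import Mathlib

open MeasureTheory Complex Filter Topology

noncomputable section

/-- The `n`-th Fourier coefficient of a function `ψ` on the unit circle. -/
def circleFourierCoeff (ψ : ℂ → ℂ) (n : ℤ) : ℂ :=
  (1 / (2 * Real.pi)) * ∫ t in (0:ℝ)..(2 * Real.pi),
    ψ (Complex.exp (Complex.I * t)) * Complex.exp (-(Complex.I * n * t))

/-- The `n`-th Fourier coefficient of `ξ ∈ L¹([0,2π])`. -/
def fourierCoeffOn' (ξ : ℝ → ℝ) (n : ℤ) : ℂ :=
  (1 / (2 * Real.pi)) * ∫ t in (0:ℝ)..(2 * Real.pi),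
    (ξ t : ℂ) * Complex.exp (-(Complex.I * n * t))

/-- The Jacobian `J(ξ̃, ψ̃) = (∂ξ̃/∂z)(∂ψ̃/∂z̄) - (∂ψ̃/∂z)(∂ξ̃/∂z̄)` of the harmonic
extensions `ξ̃(z,z̄) = ξ̂(0) + Σ_{n≥1} ξ̂(-n) z̄ⁿ + Σ_{n≥1} ξ̂(n) zⁿ` (and similarly
`ψ̃`), the Wirtinger derivatives being computed term by term:
`∂ξ̃/∂z = Σ_{n≥1} n ξ̂(n) z^{n-1}`, `∂ξ̃/∂z̄ = Σ_{m≥1} m ξ̂(-m) z̄^{m-1}`, etc. -/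
def jacobianJ (xhat phat : ℤ → ℂ) (z : ℂ) : ℂ :=
  (∑' n : ℕ, ((n : ℂ) + 1) * xhat ((n : ℤ) + 1) * z ^ n) *
    (∑' m : ℕ, ((m : ℂ) + 1) * phat (-(m + 1) : ℤ) * (starRingEnd ℂ z) ^ m)
  - (∑' n : ℕ, ((n : ℂ) + 1) * phat ((n : ℤ) + 1) * z ^ n) *
    (∑' m : ℕ, ((m : ℂ) + 1) * xhat (-(m + 1) : ℤ) * (starRingEnd ℂ z) ^ m)


lemma disk_monomial (R : ℝ) (hR : 0 ≤ R) (n m : ℕ) :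
    ∫ z in Metric.closedBall (0:ℂ) R, z ^ n * (starRingEnd ℂ z) ^ m =
      if n = m then ((Real.pi : ℂ) * (R:ℂ) ^ (2*n+2) / ((n:ℂ)+1)) else 0 := by
  set k : ℤ := (n : ℤ) - m with hk
  have key : ∀ p : ℝ × ℝ, ((p.1:ℂ) * Complex.exp (p.2 * I))^n *
      (starRingEnd ℂ ((p.1:ℂ) * Complex.exp (p.2 * I)))^m
      = (p.1:ℂ)^(n+m) * Complex.exp ((k:ℂ) * p.2 * I) := by
    intro p
    rw [map_mul, ← Complex.exp_conj, map_mul, Complex.conj_ofReal, Complex.conj_ofReal, Complex.conj_I]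
    have h1 : ((p.1:ℂ) * Complex.exp (p.2 * I))^n * ((p.1:ℂ) * Complex.exp (↑p.2 * -I))^m
        = (p.1:ℂ)^(n+m) * (Complex.exp (↑p.2 * I)^n * Complex.exp (↑p.2 * -I)^m) := by
      rw [mul_pow, mul_pow, pow_add]; ring
    rw [h1, ← Complex.exp_nat_mul, ← Complex.exp_nat_mul, ← Complex.exp_add]
    congr 1
    rw [hk]; push_cast; ring
  have hmeas1 : MeasurableSet (polarCoord.target) := polarCoord.open_target.measurableSet
  have hmeas2 : MeasurableSet (Set.Ioc (0:ℝ) R ×ˢ Set.Ioo (-Real.pi) Real.pi) :=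
    measurableSet_Ioc.prod measurableSet_Ioo
  have step1 : ∫ z in Metric.closedBall (0:ℂ) R, z ^ n * (starRingEnd ℂ z) ^ m
      = ∫ p in Set.Ioc (0:ℝ) R ×ˢ Set.Ioo (-Real.pi) Real.pi,
          ((p.1:ℂ))^(n+m+1) * Complex.exp ((k:ℂ) * p.2 * I) := by
    rw [← integral_indicator (measurableSet_closedBall),
      ← Complex.integral_comp_polarCoord_symm
        (Set.indicator (Metric.closedBall (0:ℂ) R) (fun z => z ^ n * (starRingEnd ℂ z) ^ m)),
      ← integral_indicator hmeas1, ← integral_indicator hmeas2]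
    congr 1
    funext p
    by_cases hp : p ∈ polarCoord.target
    · rw [Set.indicator_of_mem hp]
      have hp1 : 0 < p.1 := hp.1
      have habs : ‖Complex.polarCoord.symm p‖ = p.1 := by
        rw [Complex.norm_polarCoord_symm, abs_of_pos hp1]
      have hsymm : Complex.polarCoord.symm p = (p.1:ℂ) * Complex.exp (p.2 * I) := by
        rw [Complex.polarCoord_symm_apply, Complex.exp_mul_I, Complex.ofReal_cos,
          Complex.ofReal_sin]
      by_cases hle : p.1 ≤ R
      · have hmem : Complex.polarCoord.symm p ∈ Metric.closedBall (0:ℂ) R := by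
          rw [Metric.mem_closedBall, dist_zero_right, habs]; exact hle
        have hmem2 : p ∈ Set.Ioc (0:ℝ) R ×ˢ Set.Ioo (-Real.pi) Real.pi :=
          ⟨⟨hp1, hle⟩, hp.2⟩
        rw [Set.indicator_of_mem hmem, Set.indicator_of_mem hmem2, hsymm, key p]
        rw [Complex.real_smul, pow_succ']
        ring
      · have hmem : Complex.polarCoord.symm p ∉ Metric.closedBall (0:ℂ) R := by
          rw [Metric.mem_closedBall, dist_zero_right, habs]; exact hle
        have hmem2 : p ∉ Set.Ioc (0:ℝ) R ×ˢ Set.Ioo (-Real.pi) Real.pi := by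
          intro h; exact hle h.1.2
        rw [Set.indicator_of_notMem hmem, Set.indicator_of_notMem hmem2, smul_zero]
    · rw [Set.indicator_of_notMem hp]
      have hmem2 : p ∉ Set.Ioc (0:ℝ) R ×ˢ Set.Ioo (-Real.pi) Real.pi := by
        intro h
        exact hp ⟨h.1.1, h.2⟩
      rw [Set.indicator_of_notMem hmem2]
  rw [step1]
  have hprod : (volume : Measure (ℝ × ℝ)) = (volume : Measure ℝ).prod volume := rfl
  have hsplit : ∫ p in Set.Ioc (0:ℝ) R ×ˢ Set.Ioo (-Real.pi) Real.pi,
      ((p.1:ℂ))^(n+m+1) * Complex.exp ((k:ℂ) * p.2 * I)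
      = (∫ r in Set.Ioc (0:ℝ) R, ((r:ℂ))^(n+m+1)) *
        (∫ θ in Set.Ioo (-Real.pi) Real.pi, Complex.exp ((k:ℂ) * θ * I)) := by
    rw [hprod]
    exact MeasureTheory.setIntegral_prod_mul (fun r : ℝ => ((r:ℂ))^(n+m+1))
      (fun θ : ℝ => Complex.exp ((k:ℂ) * θ * I)) _ _
  have hrad : ∫ r in Set.Ioc (0:ℝ) R, ((r:ℂ))^(n+m+1)
      = ((R^(n+m+2) / (n+m+2) : ℝ) : ℂ) := by
    rw [← intervalIntegral.integral_of_le hR]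
    simp only [← Complex.ofReal_pow]
    rw [intervalIntegral.integral_ofReal, integral_pow]
    norm_num
    push_cast
    ring_nf
  have hang : ∫ θ in Set.Ioo (-Real.pi) Real.pi, Complex.exp ((k:ℂ) * θ * I)
      = if k = 0 then ((2*Real.pi : ℝ) : ℂ) else 0 := by
    rw [← integral_Ioc_eq_integral_Ioo,
      ← intervalIntegral.integral_of_le (by linarith [Real.pi_pos] : -Real.pi ≤ Real.pi)]
    by_cases hk0 : k = 0
    · simp only [hk0, Int.cast_zero, zero_mul, Complex.exp_zero, if_pos]
      rw [intervalIntegral.integral_const]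
      push_cast
      ring_nf
      simp [two_mul]
    · have hc : ((k:ℂ) * I) ≠ 0 := by
        exact mul_ne_zero (by exact_mod_cast hk0) Complex.I_ne_zero
      have hrw : ∀ θ:ℝ, (k:ℂ) * ↑θ * I = ((k:ℂ)*I) * ↑θ := fun θ => by ring
      simp_rw [hrw]
      rw [integral_exp_mul_complex hc]
      have e1 : (k:ℂ)*I*(Real.pi:ℂ) = (k:ℂ) * ((Real.pi:ℂ) * I) := by ring
      have e2 : (k:ℂ)*I*((-Real.pi : ℝ):ℂ) = ((-k : ℤ):ℂ) * ((Real.pi:ℂ) * I) := by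
        push_cast; ring
      rw [e1, e2, Complex.exp_int_mul, Complex.exp_int_mul, Complex.exp_pi_mul_I]
      have h4 : ((-1:ℂ))^(-k) = ((-1:ℂ))^k := by
        rw [zpow_neg]
        refine inv_eq_of_mul_eq_one_left ?_
        rw [← mul_zpow]; norm_num
      rw [h4, sub_self, zero_div, if_neg hk0]
  rw [hsplit, hrad, hang]
  by_cases hnm : n = m
  · subst hnm
    have hk0 : k = 0 := by rw [hk]; ring
    rw [if_pos hk0, if_pos rfl, ← Complex.ofReal_mul]
    have hre : (R ^ (n + n + 2) / ((n:ℝ) + n + 2)) * (2*Real.pi)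
        = Real.pi * R^(2*n+2) / ((n:ℝ)+1) := by
      have h1 : ((n:ℝ)+1) ≠ 0 := by positivity
      have h2 : ((n:ℝ)+n+2) ≠ 0 := by positivity
      rw [show 2*n+2 = n+n+2 by ring]
      field_simp
      ring
    rw [hre]
    push_cast
    ring
  · have hk0 : k ≠ 0 := by
      rw [hk]
      simp only [ne_eq, sub_eq_zero]
      exact_mod_cast hnm
    rw [if_neg hk0, if_neg hnm, mul_zero]

set_option maxHeartbeats 1000000 in
lemma disk_integral_series (a b c d : ℕ → ℂ) (R : ℝ) (hR0 : 0 ≤ R) (hR1 : R ≤ 1)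
    (ha : Summable fun n => ‖a n‖ * R^n) (hb : Summable fun n => ‖b n‖ * R^n)
    (hc : Summable fun n => ‖c n‖ * R^n) (hd : Summable fun n => ‖d n‖ * R^n) :
    ∫ z in Metric.closedBall (0:ℂ) R,
      ((∑' n : ℕ, a n * z^n) * (∑' m : ℕ, b m * (starRingEnd ℂ z)^m)
       - (∑' n : ℕ, c n * z^n) * (∑' m : ℕ, d m * (starRingEnd ℂ z)^m))
    = ∑' n : ℕ, (a n * b n - c n * d n) * ((Real.pi:ℂ) * (R:ℂ)^(2*n+2) / ((n:ℂ)+1)) := by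
  have hnorm : ∀ (e : ℕ → ℂ), Summable (fun n => ‖e n‖ * R^n) →
      ∀ z : ℂ, ‖z‖ ≤ R → Summable (fun n => ‖e n * z^n‖) := by
    intro e he z hz
    refine he.of_nonneg_of_le (fun n => norm_nonneg _) (fun n => ?_)
    rw [norm_mul, norm_pow]
    exact mul_le_mul_of_nonneg_left (pow_le_pow_left₀ (norm_nonneg z) hz n) (norm_nonneg _)
  set F : ℕ × ℕ → ℂ → ℂ := fun p z =>
    (a p.1 * b p.2 - c p.1 * d p.2) * (z^p.1 * (starRingEnd ℂ z)^p.2) with hF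
  have hmono : ∀ (z : ℂ), ‖z‖ ≤ R → ∀ p : ℕ × ℕ,
      ‖z^p.1 * (starRingEnd ℂ z)^p.2‖ ≤ R^p.1 * R^p.2 := by
    intro z hz p
    rw [norm_mul, norm_pow, norm_pow, RCLike.norm_conj]
    exact mul_le_mul (pow_le_pow_left₀ (norm_nonneg z) hz _)
      (pow_le_pow_left₀ (norm_nonneg z) hz _) (by positivity) (by positivity)
  -- pointwise expansion
  have hpt : ∀ z ∈ Metric.closedBall (0:ℂ) R,
      ((∑' n : ℕ, a n * z^n) * (∑' m : ℕ, b m * (starRingEnd ℂ z)^m)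
       - (∑' n : ℕ, c n * z^n) * (∑' m : ℕ, d m * (starRingEnd ℂ z)^m))
      = ∑' p : ℕ × ℕ, F p z := by
    intro z hz
    rw [Metric.mem_closedBall, dist_zero_right] at hz
    have hA := hnorm a ha z hz
    have hB := hnorm b hb (starRingEnd ℂ z) (by rwa [RCLike.norm_conj])
    have hC := hnorm c hc z hz
    have hD := hnorm d hd (starRingEnd ℂ z) (by rwa [RCLike.norm_conj])
    rw [tsum_mul_tsum_of_summable_norm hA hB, tsum_mul_tsum_of_summable_norm hC hD,
      ← (summable_mul_of_summable_norm (R := ℂ) hA hB).tsum_sub (summable_mul_of_summable_norm (R := ℂ) hC hD)]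
    exact tsum_congr fun p => by rw [hF]; ring
  rw [setIntegral_congr_fun measurableSet_closedBall hpt]
  -- interchange sum and integral
  have hcont : ∀ p : ℕ × ℕ, Continuous (F p) := by
    intro p
    exact continuous_const.mul ((continuous_pow _).mul ((Complex.continuous_conj).pow _))
  have hint : ∀ p : ℕ × ℕ, Integrable (F p) (volume.restrict (Metric.closedBall (0:ℂ) R)) :=
    fun p => (hcont p).continuousOn.integrableOn_compact (isCompact_closedBall _ _)
  set V : ℝ := (volume (Metric.closedBall (0:ℂ) R)).toReal with hV
  have hV0 : 0 ≤ V := ENNReal.toReal_nonneg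
  have hBsum : Summable (fun p : ℕ × ℕ =>
      ((‖a p.1‖ * R^p.1) * (‖b p.2‖ * R^p.2) + (‖c p.1‖ * R^p.1) * (‖d p.2‖ * R^p.2))) := by
    exact ((ha.mul_of_nonneg hb (fun n => by positivity) (fun n => by positivity)).add
      (hc.mul_of_nonneg hd (fun n => by positivity) (fun n => by positivity)))
  have hFbound : ∀ (z : ℂ), ‖z‖ ≤ R → ∀ p : ℕ × ℕ, ‖F p z‖ ≤
      ((‖a p.1‖ * R^p.1) * (‖b p.2‖ * R^p.2) + (‖c p.1‖ * R^p.1) * (‖d p.2‖ * R^p.2)) := by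
    intro z hz p
    rw [hF, norm_mul]
    calc ‖a p.1 * b p.2 - c p.1 * d p.2‖ * ‖z ^ p.1 * (starRingEnd ℂ) z ^ p.2‖
        ≤ (‖a p.1‖ * ‖b p.2‖ + ‖c p.1‖ * ‖d p.2‖) * (R^p.1 * R^p.2) := by
          refine mul_le_mul ?_ (hmono z hz p) (norm_nonneg _) (by positivity)
          refine (norm_sub_le _ _).trans ?_
          rw [norm_mul, norm_mul]
      _ = (‖a p.1‖ * R^p.1) * (‖b p.2‖ * R^p.2) + (‖c p.1‖ * R^p.1) * (‖d p.2‖ * R^p.2) := by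
          ring
  have hintnorm : Summable (fun p : ℕ × ℕ =>
      ∫ z, ‖F p z‖ ∂(volume.restrict (Metric.closedBall (0:ℂ) R))) := by
    refine (hBsum.mul_right V).of_nonneg_of_le
      (fun p => integral_nonneg (fun z => norm_nonneg _)) (fun p => ?_)
    have h1 : ∫ z, ‖F p z‖ ∂(volume.restrict (Metric.closedBall (0:ℂ) R))
        = ‖∫ z in Metric.closedBall (0:ℂ) R, ‖F p z‖‖ := by
      rw [Real.norm_of_nonneg (integral_nonneg (fun z => norm_nonneg _))]
    rw [h1]
    refine norm_setIntegral_le_of_norm_le_const ?_ (fun z hz => ?_)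
    · exact (isCompact_closedBall _ _).measure_lt_top
    · rw [Real.norm_of_nonneg (norm_nonneg _)]
      refine hFbound z ?_ p
      rwa [Metric.mem_closedBall, dist_zero_right] at hz
  rw [← integral_tsum_of_summable_integral_norm hint hintnorm]
  -- compute each term
  have hterm : ∀ p : ℕ × ℕ, ∫ z in Metric.closedBall (0:ℂ) R, F p z
      = (a p.1 * b p.2 - c p.1 * d p.2) *
        (if p.1 = p.2 then ((Real.pi : ℂ) * (R:ℂ) ^ (2*p.1+2) / ((p.1:ℂ)+1)) else 0) := by
    intro p
    rw [hF]
    simp only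
    rw [integral_const_mul, disk_monomial R hR0 p.1 p.2]
  -- sum over diagonal
  have hsum2 : Summable (fun p : ℕ × ℕ => ∫ z in Metric.closedBall (0:ℂ) R, F p z) := by
    refine Summable.of_norm_bounded (hBsum.mul_right Real.pi) (fun p => ?_)
    rw [hterm p]
    by_cases hpq : p.1 = p.2
    · rw [if_pos hpq, norm_mul]
      have h2 : ‖(Real.pi : ℂ) * (R:ℂ) ^ (2*p.1+2) / ((p.1:ℂ)+1)‖ ≤ Real.pi * (R^p.1 * R^p.2) := by
        rw [norm_div, norm_mul, norm_pow]
        have hden : (1:ℝ) ≤ ‖(p.1:ℂ)+1‖ := by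
          have : ((p.1:ℂ)+1) = ((p.1+1 : ℕ):ℂ) := by push_cast; ring
          rw [this, Complex.norm_natCast]
          exact_mod_cast Nat.one_le_iff_ne_zero.2 (Nat.succ_ne_zero _)
        have hnum : ‖(Real.pi:ℂ)‖ * ‖(R:ℂ)‖^(2*p.1+2) ≤ Real.pi * (R^p.1 * R^p.2) := by
          rw [Complex.norm_real, Real.norm_of_nonneg Real.pi_pos.le,
            Complex.norm_real, Real.norm_of_nonneg hR0, ← hpq]
          refine mul_le_mul_of_nonneg_left ?_ Real.pi_pos.le
          rw [← pow_add]
          exact pow_le_pow_of_le_one hR0 hR1 (by omega)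
        calc ‖(Real.pi:ℂ)‖ * ‖(R:ℂ)‖^(2*p.1+2) / ‖(p.1:ℂ)+1‖
            ≤ ‖(Real.pi:ℂ)‖ * ‖(R:ℂ)‖^(2*p.1+2) / 1 := by
              refine div_le_div_of_nonneg_left ?_ ?_ hden <;> positivity
          _ = ‖(Real.pi:ℂ)‖ * ‖(R:ℂ)‖^(2*p.1+2) := by rw [div_one]
          _ ≤ Real.pi * (R^p.1 * R^p.2) := hnum
      calc ‖a p.1 * b p.2 - c p.1 * d p.2‖ * ‖(Real.pi : ℂ) * (R:ℂ) ^ (2*p.1+2) / ((p.1:ℂ)+1)‖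
          ≤ (‖a p.1‖ * ‖b p.2‖ + ‖c p.1‖ * ‖d p.2‖) * (Real.pi * (R^p.1 * R^p.2)) := by
            refine mul_le_mul ?_ h2 (norm_nonneg _) (by positivity)
            refine (norm_sub_le _ _).trans ?_
            rw [norm_mul, norm_mul]
        _ ≤ ((‖a p.1‖ * R^p.1) * (‖b p.2‖ * R^p.2)
             + (‖c p.1‖ * R^p.1) * (‖d p.2‖ * R^p.2)) * Real.pi := le_of_eq (by ring)
    · rw [if_neg hpq, mul_zero, norm_zero]
      positivity
  rw [Summable.tsum_prod hsum2]
  refine tsum_congr fun n => ?_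
  rw [tsum_eq_single n ?_]
  · rw [hterm (n, n)]
    simp
  · intro m hm
    rw [hterm (n, m)]
    simp only
    rw [if_neg (fun h => hm h.symm), mul_zero]

lemma norm_exp_re_zero (z : ℂ) (hz : z.re = 0) : ‖Complex.exp z‖ = 1 := by
  rw [Complex.norm_exp, hz, Real.exp_zero]

lemma fourierCoeffOn'_norm_le (ξ : ℝ → ℝ)
    (hξ : IntervalIntegrable ξ MeasureTheory.volume 0 (2 * Real.pi)) (k : ℤ) :
    ‖fourierCoeffOn' ξ k‖ ≤ (1/(2*Real.pi)) * ∫ t in (0:ℝ)..(2*Real.pi), |ξ t| := by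
  rw [fourierCoeffOn', norm_mul]
  have h1 : ‖(1 / (2 * Real.pi) : ℂ)‖ = 1/(2*Real.pi) := by
    rw [show ((1 : ℂ) / (2 * Real.pi)) = ((1/(2*Real.pi) : ℝ) : ℂ) by push_cast; ring,
      Complex.norm_real, Real.norm_of_nonneg (by positivity)]
  rw [h1]
  refine mul_le_mul_of_nonneg_left ?_ (by positivity)
  refine (intervalIntegral.norm_integral_le_integral_norm (by positivity)).trans ?_
  refine le_of_eq (intervalIntegral.integral_congr fun t ht => ?_)
  rw [norm_mul, norm_exp_re_zero _ (by simp), Complex.norm_real, mul_one]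
  exact Real.norm_eq_abs _

lemma norm_int_cast_complex (k : ℤ) : ‖(k:ℂ)‖ = |(k:ℝ)| := by
  rw [← Complex.ofReal_intCast, Complex.norm_real, Real.norm_eq_abs]


set_option maxHeartbeats 1000000

/-- Equations (3.10)–(3.11): with `dz ∧ dz̄ = -2i dx dy`,
`lim_{R↑1} ∫_{|z|≤R} J(ξ̃,ψ̃) dz∧dz̄ = 2πi Σ_{n∈ℤ} n ψ̂(n) ξ̂(-n)
  = ∫₀^{2π} (d/dt)[ψ(e^{it})] ξ(t) dt`,
the derivative of `ψ(e^{it})` being given by its Fourier series `Σ i n ψ̂(n) e^{int}`. -/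
theorem stmt_19
    (ξ : ℝ → ℝ) (hξ : IntervalIntegrable ξ MeasureTheory.volume 0 (2 * Real.pi))
    (ψ : ℂ → ℂ)
    (hψi : IntervalIntegrable (fun t : ℝ => ψ (Complex.exp (Complex.I * t)))
      MeasureTheory.volume 0 (2 * Real.pi))
    (hψ : Summable fun n : ℤ => ‖(n : ℂ) * circleFourierCoeff ψ n‖) :
    Tendsto (fun R : ℝ =>
        ∫ z in Metric.closedBall (0 : ℂ) R,
          (-2 * Complex.I) * jacobianJ (fourierCoeffOn' ξ) (circleFourierCoeff ψ) z)
      (𝓝[<] (1 : ℝ))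
      (𝓝 (2 * Real.pi * Complex.I *
        ∑' n : ℤ, (n : ℂ) * circleFourierCoeff ψ n * fourierCoeffOn' ξ (-n))) ∧
    2 * Real.pi * Complex.I *
        (∑' n : ℤ, (n : ℂ) * circleFourierCoeff ψ n * fourierCoeffOn' ξ (-n))
      = ∫ t in (0:ℝ)..(2 * Real.pi),
          (∑' n : ℤ, Complex.I * n * circleFourierCoeff ψ n * Complex.exp (Complex.I * n * t))
            * (ξ t : ℂ) := by
  have pi_pos := Real.pi_pos
  set P := circleFourierCoeff ψ with hPdef
  set X := fourierCoeffOn' ξ with hXdef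
  set CX : ℝ := (1/(2*Real.pi)) * ∫ t in (0:ℝ)..(2*Real.pi), |ξ t| with hCXdef
  have hCX0 : 0 ≤ CX := by
    refine mul_nonneg (by positivity) ?_
    exact intervalIntegral.integral_nonneg (by positivity) (fun t _ => abs_nonneg _)
  have hXle : ∀ k, ‖X k‖ ≤ CX := fun k => fourierCoeffOn'_norm_le ξ hξ k
  -- coefficient sequences
  set a : ℕ → ℂ := fun n => ((n:ℂ)+1) * X ((n:ℤ)+1) with hadef
  set b : ℕ → ℂ := fun m => ((m:ℂ)+1) * P (-(m+1) : ℤ) with hbdef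
  set c : ℕ → ℂ := fun n => ((n:ℂ)+1) * P ((n:ℤ)+1) with hcdef
  set d : ℕ → ℂ := fun m => ((m:ℂ)+1) * X (-(m+1) : ℤ) with hddef
  have hnorm_nat : ∀ n : ℕ, ‖((n:ℂ)+1)‖ = (n:ℝ)+1 := by
    intro n
    rw [show ((n:ℂ)+1) = (((n+1:ℕ)):ℂ) by push_cast; ring, Complex.norm_natCast]
    push_cast; ring
  have hinj1 : Function.Injective (fun n : ℕ => (n : ℤ) + 1) := fun x y h => by
    simp only at h; omega
  have hinj2 : Function.Injective (fun n : ℕ => -((n : ℤ) + 1)) := fun x y h => by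
    simp only at h; omega
  have hbs : Summable (fun m : ℕ => ‖b m‖) := by
    have h1 := hψ.comp_injective hinj2
    refine h1.congr (fun m => ?_)
    simp only [Function.comp]
    rw [norm_mul, norm_mul, hnorm_nat, norm_int_cast_complex]
    have : |((-((m:ℤ) + 1) : ℤ) : ℝ)| = (m:ℝ)+1 := by push_cast; rw [abs_neg, abs_of_pos]; positivity
    rw [this]
  have hcs : Summable (fun n : ℕ => ‖c n‖) := by
    have h1 := hψ.comp_injective hinj1
    refine h1.congr (fun m => ?_)
    simp only [Function.comp]
    rw [norm_mul, norm_mul, hnorm_nat, norm_int_cast_complex]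
    have : |(((m:ℤ) + 1 : ℤ) : ℝ)| = (m:ℝ)+1 := by push_cast; rw [abs_of_pos]; positivity
    rw [this]
  have ha_le : ∀ n : ℕ, ‖a n‖ ≤ ((n:ℝ)+1) * CX := by
    intro n
    rw [hadef, norm_mul, hnorm_nat]
    exact mul_le_mul_of_nonneg_left (hXle _) (by positivity)
  have hd_le : ∀ n : ℕ, ‖d n‖ ≤ ((n:ℝ)+1) * CX := by
    intro n
    rw [hddef, norm_mul, hnorm_nat]
    exact mul_le_mul_of_nonneg_left (hXle _) (by positivity)
  -- summability with R factors
  have hgeom : ∀ R : ℝ, 0 ≤ R → R < 1 → Summable (fun n : ℕ => (((n:ℝ)+1) * CX) * R^n) := by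
    intro R hR0 hR1
    have h1 : Summable (fun n : ℕ => ((n:ℝ)^1 * R^n)) :=
      summable_pow_mul_geometric_of_norm_lt_one 1 (by rwa [Real.norm_of_nonneg hR0])
    have h2 : Summable (fun n : ℕ => R^n) := summable_geometric_of_lt_one hR0 hR1
    refine ((h1.add h2).mul_left CX).congr (fun n => ?_)
    simp only [pow_one]
    ring
  have haR : ∀ R : ℝ, 0 ≤ R → R < 1 → Summable (fun n : ℕ => ‖a n‖ * R^n) := by
    intro R hR0 hR1
    refine (hgeom R hR0 hR1).of_nonneg_of_le (fun n => by positivity) (fun n => ?_)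
    exact mul_le_mul_of_nonneg_right (ha_le n) (pow_nonneg hR0 n)
  have hdR : ∀ R : ℝ, 0 ≤ R → R < 1 → Summable (fun n : ℕ => ‖d n‖ * R^n) := by
    intro R hR0 hR1
    refine (hgeom R hR0 hR1).of_nonneg_of_le (fun n => by positivity) (fun n => ?_)
    exact mul_le_mul_of_nonneg_right (hd_le n) (pow_nonneg hR0 n)
  have hbR : ∀ R : ℝ, 0 ≤ R → R ≤ 1 → Summable (fun n : ℕ => ‖b n‖ * R^n) := by
    intro R hR0 hR1
    refine hbs.of_nonneg_of_le (fun n => by positivity) (fun n => ?_)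
    calc ‖b n‖ * R^n ≤ ‖b n‖ * 1 :=
          mul_le_mul_of_nonneg_left (pow_le_one₀ hR0 hR1) (norm_nonneg _)
      _ = ‖b n‖ := mul_one _
  have hcR : ∀ R : ℝ, 0 ≤ R → R ≤ 1 → Summable (fun n : ℕ => ‖c n‖ * R^n) := by
    intro R hR0 hR1
    refine hcs.of_nonneg_of_le (fun n => by positivity) (fun n => ?_)
    calc ‖c n‖ * R^n ≤ ‖c n‖ * 1 :=
          mul_le_mul_of_nonneg_left (pow_le_one₀ hR0 hR1) (norm_nonneg _)
      _ = ‖c n‖ := mul_one _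
  -- diagonal coefficients
  set u : ℕ → ℂ := fun n => ((n:ℂ)+1) *
    (X ((n:ℤ)+1) * P (-(n+1):ℤ) - P ((n:ℤ)+1) * X (-(n+1):ℤ)) with hudef
  have hbn : ∀ n : ℕ, ‖b n‖ = ((n:ℝ)+1) * ‖P (-(n+1):ℤ)‖ := fun n => by
    rw [hbdef]; rw [norm_mul, hnorm_nat]
  have hcn : ∀ n : ℕ, ‖c n‖ = ((n:ℝ)+1) * ‖P ((n:ℤ)+1)‖ := fun n => by
    rw [hcdef]; rw [norm_mul, hnorm_nat]
  have hus : Summable (fun n : ℕ => ‖u n‖) := by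
    refine ((hbs.add hcs).mul_left CX).of_nonneg_of_le (fun n => norm_nonneg _) (fun n => ?_)
    have h1 : ‖u n‖ ≤ ((n:ℝ)+1) *
        (‖X ((n:ℤ)+1)‖ * ‖P (-(n+1):ℤ)‖ + ‖P ((n:ℤ)+1)‖ * ‖X (-(n+1):ℤ)‖) := by
      rw [hudef]
      rw [norm_mul, hnorm_nat]
      refine mul_le_mul_of_nonneg_left ?_ (by positivity)
      refine (norm_sub_le _ _).trans ?_
      rw [norm_mul, norm_mul]
    refine h1.trans ?_
    rw [hbn, hcn]
    have e1 := hXle ((n:ℤ)+1)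
    have e2 := hXle (-(n+1):ℤ)
    nlinarith [mul_le_mul_of_nonneg_right e1 (norm_nonneg (P (-(n+1):ℤ))),
      mul_le_mul_of_nonneg_right e2 (norm_nonneg (P ((n:ℤ)+1))),
      norm_nonneg (P (-(n+1):ℤ)), norm_nonneg (P ((n:ℤ)+1)),
      Nat.cast_nonneg (α := ℝ) n]
  have hwu : ∀ (n : ℕ) (RC : ℂ),
      (a n * b n - c n * d n) * ((Real.pi:ℂ) * RC / ((n:ℂ)+1))
      = (Real.pi:ℂ) * RC * u n := by
    intro n RC
    have hne : ((n:ℂ)+1) ≠ 0 := Nat.cast_add_one_ne_zero n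
    rw [hadef, hbdef, hcdef, hddef, hudef]
    field_simp
  -- the ℤ-indexed series
  set F : ℤ → ℂ := fun n => (n:ℂ) * P n * X (-n) with hFdef
  have hsFnorm : Summable (fun n : ℤ => ‖F n‖) := by
    refine (hψ.mul_right CX).of_nonneg_of_le (fun n => norm_nonneg _) (fun n => ?_)
    rw [hFdef]; rw [norm_mul]
    exact mul_le_mul_of_nonneg_left (hXle _) (norm_nonneg _)
  have hsF : Summable F := hsFnorm.of_norm
  have hinjN : Function.Injective (fun n : ℕ => (n : ℤ)) := fun x y h => by
    simpa using h
  have hinj1' : Function.Injective (fun n : ℕ => ((n+1 : ℕ) : ℤ)) := fun x y h => by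
    simp only at h; omega
  have hS1 : Summable (fun n : ℕ => F ((n:ℤ))) := (hsF.comp_injective hinjN).congr (fun _ => rfl)
  have hS1' : Summable (fun n : ℕ => F (((n+1:ℕ):ℤ))) :=
    (hsF.comp_injective hinj1').congr (fun _ => rfl)
  have hS2 : Summable (fun n : ℕ => F (-((n:ℤ)+1))) :=
    (hsF.comp_injective hinj2).congr (fun _ => rfl)
  have hZ : ∑' n : ℤ, F n = -∑' n : ℕ, u n := by
    rw [tsum_of_nat_of_neg_add_one hS1 hS2]
    rw [Summable.tsum_eq_zero_add hS1]
    have hF0 : F ((0:ℕ):ℤ) = 0 := by rw [hFdef]; simp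
    rw [hF0, zero_add, ← Summable.tsum_add hS1' hS2, ← tsum_neg]
    refine tsum_congr (fun n => ?_)
    rw [hFdef, hudef]
    simp only
    push_cast
    ring
  -- part 2
  have h2pi0 : (0:ℝ) ≤ 2*Real.pi := by positivity
  have h2pine : ((2*Real.pi : ℝ):ℂ) ≠ 0 := by
    simp only [ne_eq, Complex.ofReal_eq_zero]
    positivity
  have hGnorm : ∀ (n : ℤ) (t : ℝ),
      ‖Complex.I * n * P n * Complex.exp (Complex.I * n * t) * (ξ t : ℂ)‖
      = ‖(n:ℂ) * P n‖ * |ξ t| := by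
    intro n t
    rw [norm_mul, norm_mul, norm_exp_re_zero _ (by simp), mul_one, norm_mul, norm_mul,
      Complex.norm_I, one_mul, Complex.norm_real, Real.norm_eq_abs, ← norm_mul]
  have hξInt : Integrable (fun t => (ξ t : ℂ)) (volume.restrict (Set.Ioc (0:ℝ) (2*Real.pi))) := by
    exact (hξ.1).ofReal
  have hGint : ∀ n : ℤ, Integrable
      (fun t : ℝ => Complex.I * n * P n * Complex.exp (Complex.I * n * t) * (ξ t : ℂ))
      (volume.restrict (Set.Ioc (0:ℝ) (2*Real.pi))) := by
    intro n
    refine Integrable.bdd_mul (c := ‖(n:ℂ) * P n‖) hξInt ?_ (Filter.Eventually.of_forall fun t => ?_)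
    · have hcont2 : Continuous fun t : ℝ => Complex.I * n * P n * Complex.exp (Complex.I * n * t) :=
        continuous_const.mul (Complex.continuous_exp.comp (continuous_const.mul Complex.continuous_ofReal))
      exact hcont2.aestronglyMeasurable.restrict
    · rw [norm_mul, norm_mul, norm_exp_re_zero _ (by simp), mul_one, norm_mul,
        Complex.norm_I, one_mul, ← norm_mul]
  have hGsum : Summable (fun n : ℤ => ∫ t in Set.Ioc (0:ℝ) (2*Real.pi),
      ‖Complex.I * n * P n * Complex.exp (Complex.I * n * t) * (ξ t : ℂ)‖) := by
    refine (hψ.mul_right (∫ t in Set.Ioc (0:ℝ) (2*Real.pi), |ξ t|)).congr (fun n => ?_)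
    rw [← MeasureTheory.integral_const_mul]
    refine (MeasureTheory.integral_congr_ae (Filter.Eventually.of_forall (fun t => ?_))).symm
    exact hGnorm n t
  have hXn : ∀ n : ℤ, ∫ t in Set.Ioc (0:ℝ) (2*Real.pi),
      Complex.exp (Complex.I * n * t) * (ξ t : ℂ) = ((2*Real.pi : ℝ):ℂ) * X (-n) := by
    intro n
    rw [← intervalIntegral.integral_of_le h2pi0, hXdef]
    rw [fourierCoeffOn']
    have hcg : ∀ t : ℝ, (ξ t : ℂ) * Complex.exp (-(Complex.I * ((-n : ℤ):ℂ) * t))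
        = Complex.exp (Complex.I * n * t) * (ξ t : ℂ) := by
      intro t
      rw [mul_comm]
      congr 2
      push_cast
      ring
    rw [← intervalIntegral.integral_congr (fun t _ => hcg t)]
    rw [← mul_assoc]
    rw [show ((2*Real.pi : ℝ):ℂ) * (1 / (2 * Real.pi)) = 1 by
      push_cast
      rw [mul_one_div, div_self (by exact_mod_cast (by positivity : (2*Real.pi : ℝ) ≠ 0) :
        (2*(Real.pi:ℂ)) ≠ 0)]]
    rw [one_mul]
  have part2 : 2 * (Real.pi:ℂ) * Complex.I * (∑' n : ℤ, F n)
      = ∫ t in (0:ℝ)..(2 * Real.pi),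
          (∑' n : ℤ, Complex.I * n * P n * Complex.exp (Complex.I * n * t)) * (ξ t : ℂ) := by
    rw [intervalIntegral.integral_of_le h2pi0]
    have hp1 : ∀ t : ℝ, (∑' n : ℤ, Complex.I * n * P n * Complex.exp (Complex.I * n * t)) * (ξ t : ℂ)
        = ∑' n : ℤ, Complex.I * n * P n * Complex.exp (Complex.I * n * t) * (ξ t : ℂ) :=
      fun t => (tsum_mul_right).symm
    rw [MeasureTheory.integral_congr_ae (Filter.Eventually.of_forall (fun t => hp1 t))]
    rw [← MeasureTheory.integral_tsum_of_summable_integral_norm hGint hGsum]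
    refine Eq.symm ?_
    have hterm : ∀ n : ℤ, ∫ t in Set.Ioc (0:ℝ) (2*Real.pi),
        Complex.I * n * P n * Complex.exp (Complex.I * n * t) * (ξ t : ℂ)
        = 2 * (Real.pi:ℂ) * Complex.I * F n := by
      intro n
      have : ∀ t : ℝ, Complex.I * n * P n * Complex.exp (Complex.I * n * t) * (ξ t : ℂ)
          = (Complex.I * n * P n) * (Complex.exp (Complex.I * n * t) * (ξ t : ℂ)) := by
        intro t; ring
      rw [MeasureTheory.integral_congr_ae (Filter.Eventually.of_forall (fun t => this t))]
      rw [MeasureTheory.integral_const_mul, hXn n]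
      simp only [hFdef]
      push_cast
      ring
    rw [tsum_congr hterm, tsum_mul_left]
  -- key integral formula
  have key : ∀ R : ℝ, 0 < R → R < 1 →
      (∫ z in Metric.closedBall (0:ℂ) R, (-2*Complex.I) * jacobianJ X P z)
      = (-2*Complex.I) * ∑' n : ℕ, (Real.pi:ℂ) * (R:ℂ)^(2*n+2) * u n := by
    intro R hR0 hR1
    rw [MeasureTheory.integral_const_mul]
    congr 1
    have h1 := disk_integral_series a b c d R hR0.le hR1.le (haR R hR0.le hR1)
      (hbR R hR0.le hR1.le) (hcR R hR0.le hR1.le) (hdR R hR0.le hR1)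
    calc ∫ z in Metric.closedBall (0:ℂ) R, jacobianJ X P z
        = ∫ z in Metric.closedBall (0:ℂ) R,
            ((∑' n : ℕ, a n * z^n) * (∑' m : ℕ, b m * (starRingEnd ℂ z)^m)
             - (∑' n : ℕ, c n * z^n) * (∑' m : ℕ, d m * (starRingEnd ℂ z)^m)) := by
          refine setIntegral_congr_fun measurableSet_closedBall (fun z _ => ?_)
          simp only [jacobianJ, hadef, hbdef, hcdef, hddef]
      _ = ∑' n : ℕ, (a n * b n - c n * d n) * ((Real.pi:ℂ) * (R:ℂ)^(2*n+2)/((n:ℂ)+1)) := h1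
      _ = ∑' n : ℕ, (Real.pi:ℂ) * (R:ℂ)^(2*n+2) * u n := tsum_congr (fun n => hwu n _)
  have hev : ∀ᶠ R in 𝓝[<] (1:ℝ),
      (∫ z in Metric.closedBall (0:ℂ) R, (-2*Complex.I) * jacobianJ X P z)
      = (-2*Complex.I) * ∑' n : ℕ, (Real.pi:ℂ) * (R:ℂ)^(2*n+2) * u n := by
    filter_upwards [Ioo_mem_nhdsLT_of_mem (by norm_num : (1:ℝ) ∈ Set.Ioc (0:ℝ) 1)] with R hR
    exact key R hR.1 hR.2
  have hlim : Tendsto (fun R : ℝ =>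
      (-2*Complex.I) * ∑' n : ℕ, (Real.pi:ℂ) * (R:ℂ)^(2*n+2) * u n) (𝓝[<] 1)
      (𝓝 ((-2*Complex.I) * ∑' n : ℕ, (Real.pi:ℂ) * u n)) := by
    refine Tendsto.const_mul _ ?_
    refine tendsto_tsum_of_dominated_convergence (f := fun (R : ℝ) (n : ℕ) =>
      (Real.pi:ℂ) * (R:ℂ)^(2*n+2) * u n) (g := fun n => (Real.pi:ℂ) * u n)
      (bound := fun n => Real.pi * ‖u n‖) (hus.mul_left Real.pi) ?_ ?_
    · intro n
      have hcont : Continuous (fun R : ℝ => (Real.pi:ℂ) * (R:ℂ)^(2*n+2) * u n) :=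
        (continuous_const.mul (Complex.continuous_ofReal.pow _)).mul continuous_const
      have h2 := (hcont.tendsto 1).mono_left
        (nhdsWithin_le_nhds (s := Set.Iio (1:ℝ)))
      simpa using h2
    · filter_upwards [Ioo_mem_nhdsLT_of_mem (by norm_num : (1:ℝ) ∈ Set.Ioc (0:ℝ) 1)] with R hR
      intro n
      rw [norm_mul, norm_mul, Complex.norm_real, Real.norm_of_nonneg pi_pos.le, norm_pow,
        Complex.norm_real, Real.norm_of_nonneg hR.1.le]
      have hp1 : R^(2*n+2) ≤ 1 := pow_le_one₀ hR.1.le hR.2.le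
      calc Real.pi * R^(2*n+2) * ‖u n‖ = Real.pi * (R^(2*n+2) * ‖u n‖) := by ring
        _ ≤ Real.pi * (1 * ‖u n‖) := mul_le_mul_of_nonneg_left
            (mul_le_mul_of_nonneg_right hp1 (norm_nonneg _)) pi_pos.le
        _ = Real.pi * ‖u n‖ := by ring
  have htarget : 2 * (Real.pi:ℂ) * Complex.I * (∑' n : ℤ, F n)
      = (-2*Complex.I) * ∑' n : ℕ, (Real.pi:ℂ) * u n := by
    rw [hZ, tsum_mul_left]
    ring
  constructor
  · rw [htarget]
    exact Tendsto.congr' (EventuallyEq.symm hev) hlim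
  · exact part2
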